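/- Let G : ℂⁿ → ℝ be smooth on ℂⁿ \ {0}, continuous at 0 with G(0) = 0, and satisfy G(λv) = |λ|²G(v) for all λ ∈ ℂ and v ∈ ℂⁿ. Then the following are equivalent: (i) for every v ≠ 0 the real Hessian satisfies D²G(v)[a,b] = D²G(v)[i·a, i·b] for all a, b ∈ ℂⁿ; (ii) there exists a Hermitian n×n matrix H = (h_{jk̄}) such that G(v) = Σ_{j,k} h_{jk̄} vʲ v̄ᵏ for all v ∈ ℂⁿ. (Condition (i) is the vanishing of the Finslerian tensor Ĝ with components G_{ij} = ∂²G/∂vⁱ∂vʲ; thus Ĝ vanishes identically if and only if G comes from a Hermitian metric.) -/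

import Mathlib

open ContinuousLinearMap Complex

section helpers

variable {E F : Type*} [NormedAddCommGroup E] [NormedSpace ℝ E]
  [NormedAddCommGroup F] [NormedSpace ℝ F]

/-- A function with vanishing derivative on an open preconnected set is constant there. -/
theorem const_on_of_hasFDerivAt_zero {S : Set E} (hS : IsOpen S) (hS' : IsPreconnected S)
    {g : E → F} (hg : ∀ v ∈ S, HasFDerivAt g (0 : E →L[ℝ] F) v) {x y : E} (hx : x ∈ S)
    (hy : y ∈ S) : g x = g y := by
  have loc : ∀ v ∈ S, ∀ᶠ u in nhds v, g u = g v := by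
    intro v hv
    obtain ⟨r, hr, hball⟩ := Metric.isOpen_iff.1 hS v hv
    filter_upwards [Metric.ball_mem_nhds v hr] with u hu
    refine (convex_ball v r).is_const_of_fderivWithin_eq_zero
      (fun z hz => ((hg z (hball hz)).differentiableAt).differentiableWithinAt)
      (fun z hz => ?_) hu (Metric.mem_ball_self hr)
    rw [fderivWithin_of_isOpen Metric.isOpen_ball hz]
    exact (hg z (hball hz)).fderiv
  by_contra hne
  set U : Set E := {u | u ∈ S ∧ g u = g x} with hU
  set V : Set E := {u | u ∈ S ∧ g u ≠ g x} with hV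
  have hUopen : IsOpen U := by
    rw [isOpen_iff_mem_nhds]
    intro u hu
    filter_upwards [loc u hu.1, hS.eventually_mem hu.1] with z hz hzS
    exact ⟨hzS, hz.trans hu.2⟩
  have hVopen : IsOpen V := by
    rw [isOpen_iff_mem_nhds]
    intro u hu
    filter_upwards [loc u hu.1, hS.eventually_mem hu.1] with z hz hzS
    exact ⟨hzS, hz.trans_ne hu.2⟩
  obtain ⟨z, hzS, ⟨_, hz1⟩, _, hz2⟩ := hS' U V hUopen hVopen
    (fun u hu => by by_cases h : g u = g x
                    · exact Or.inl ⟨hu, h⟩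
                    · exact Or.inr ⟨hu, h⟩)
    ⟨x, hx, hx, rfl⟩ ⟨y, hy, hy, fun h => hne h.symm⟩
  exact hz2 hz1

end helpers

section key

variable {E : Type*} [NormedAddCommGroup E] [NormedSpace ℝ E] [NormedSpace ℂ E]
  [IsScalarTower ℝ ℂ E]

set_option maxHeartbeats 2000000 in
set_option synthInstance.maxHeartbeats 400000 in
theorem key (hrank : 1 < Module.rank ℝ E) (G : E → ℝ)
    (hsmooth : ∀ v : E, v ≠ 0 → ContDiffAt ℝ (⊤ : ℕ∞) G v)
    (h0 : G 0 = 0)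
    (hhom : ∀ (c : ℂ) (v : E), G (c • v) = ‖c‖ ^ 2 * G v)
    (hi : ∀ v : E, v ≠ 0 → ∀ a b : E, fderiv ℝ (fderiv ℝ G) v a b
          = fderiv ℝ (fderiv ℝ G) v (Complex.I • a) (Complex.I • b)) :
    ∃ B₀ : E →L[ℝ] E →L[ℝ] ℝ,
      (∀ a b : E, B₀ a b = B₀ b a) ∧
      (∀ a b : E, B₀ a b = B₀ (Complex.I • a) (Complex.I • b)) ∧
      (∀ v : E, G v = (1/2) * B₀ v v) := by
  have hSopen : IsOpen ({0}ᶜ : Set E) := isOpen_compl_singleton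
  have hSconn : IsPreconnected ({0}ᶜ : Set E) :=
    (isConnected_compl_singleton_of_one_lt_rank hrank 0).isPreconnected
  have hmemS : ∀ v : E, v ≠ 0 → v ∈ ({0}ᶜ : Set E) := fun v hv => hv
  set f := fderiv ℝ G with hfdef
  set B := fderiv ℝ f with hBdef
  -- differentiability
  have hfc : ∀ v : E, v ≠ 0 → ContDiffAt ℝ (⊤ : ℕ∞) f v := fun v hv =>
    (hsmooth v hv).fderiv_right (by simp)
  have hfd : ∀ v : E, v ≠ 0 → HasFDerivAt G (f v) v := fun v hv =>
    ((hsmooth v hv).differentiableAt (by simp)).hasFDerivAt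
  have hBd : ∀ v : E, v ≠ 0 → HasFDerivAt f (B v) v := fun v hv =>
    ((hfc v hv).differentiableAt (by simp)).hasFDerivAt
  have hCd : ∀ v : E, v ≠ 0 → HasFDerivAt B (fderiv ℝ B v) v := fun v hv =>
    (((hfc v hv).fderiv_right (m := (⊤ : ℕ∞)) (by simp)).differentiableAt (by simp)).hasFDerivAt
  -- evaluation maps
  let ev2 : E → E → (E →L[ℝ] E →L[ℝ] ℝ) →L[ℝ] ℝ := fun a b =>
    (ContinuousLinearMap.apply ℝ ℝ b).comp (ContinuousLinearMap.apply ℝ (E →L[ℝ] ℝ) a)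
  have hBval : ∀ v : E, v ≠ 0 → ∀ a b : E,
      HasFDerivAt (fun u => B u a b) ((ev2 a b).comp (fderiv ℝ B v)) v := by
    intro v hv a b
    exact ((((hCd v hv).clm_apply (hasFDerivAt_const a v)).clm_apply
      (hasFDerivAt_const b v))).congr_fderiv (by ext w; simp [ev2])
  have hmem : ∀ v : E, v ≠ 0 → ∀ᶠ u in nhds v, u ≠ 0 := fun v hv =>
    hSopen.eventually_mem (hmemS v hv)
  -- symmetry of B
  have hBsym : ∀ u : E, u ≠ 0 → ∀ a b : E, B u a b = B u b a := fun u hu a b =>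
    (hsmooth u hu).isSymmSndFDerivAt (by rw [minSmoothness_of_isRCLikeNormedField]; exact WithTop.coe_le_coe.2 (le_top : (2:ℕ∞) ≤ ⊤)) a b
  -- symmetry in last two slots of C
  have hsym23 : ∀ v : E, v ≠ 0 → ∀ w a b : E,
      fderiv ℝ B v w a b = fderiv ℝ B v w b a := by
    intro v hv w a b
    have h1 := hBval v hv a b
    have h2 := hBval v hv b a
    have heq : (fun u => B u b a) =ᶠ[nhds v] fun u => B u a b := by
      filter_upwards [hmem v hv] with u hu
      exact (hBsym u hu b a)
    have h3 : HasFDerivAt (fun u => B u a b) ((ev2 b a).comp (fderiv ℝ B v)) v :=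
      h2.congr_of_eventuallyEq heq.symm
    have h4 := h1.unique h3
    simpa only [ev2, ContinuousLinearMap.coe_comp', Function.comp_apply, ContinuousLinearMap.apply_apply] using congrArg (fun L => L w) h4
  -- (1,1) invariance of C
  have hC11 : ∀ v : E, v ≠ 0 → ∀ w a b : E,
      fderiv ℝ B v w a b = fderiv ℝ B v w (Complex.I • a) (Complex.I • b) := by
    intro v hv w a b
    have h1 := hBval v hv a b
    have h2 := hBval v hv (Complex.I • a) (Complex.I • b)
    have heq : (fun u => B u (Complex.I • a) (Complex.I • b)) =ᶠ[nhds v]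
        fun u => B u a b := by
      filter_upwards [hmem v hv] with u hu
      exact (hi u hu a b).symm
    have h3 : HasFDerivAt (fun u => B u a b)
        ((ev2 (Complex.I • a) (Complex.I • b)).comp (fderiv ℝ B v)) v :=
      h2.congr_of_eventuallyEq heq.symm
    have h4 := h1.unique h3
    simpa only [ev2, ContinuousLinearMap.coe_comp', Function.comp_apply, ContinuousLinearMap.apply_apply] using congrArg (fun L => L w) h4
  -- symmetry in first two slots of C
  have hsym12 : ∀ v : E, v ≠ 0 → ∀ w a b : E,
      fderiv ℝ B v w a b = fderiv ℝ B v a w b := by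
    intro v hv w a b
    have h := (hfc v hv).isSymmSndFDerivAt (by rw [minSmoothness_of_isRCLikeNormedField]; exact WithTop.coe_le_coe.2 (le_top : (2:ℕ∞) ≤ ⊤)) w a
    rw [← hBdef] at h
    exact congrArg (fun L => L b) h
  -- C vanishes
  have hII : ∀ x : E, Complex.I • (Complex.I • x) = -x := fun x => by
    rw [smul_smul, Complex.I_mul_I, neg_one_smul]
  have hCzero : ∀ v : E, v ≠ 0 → fderiv ℝ B v = 0 := by
    intro v hv
    have s12 := hsym12 v hv
    have s23 := hsym23 v hv
    have r := hC11 v hv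
    set T := fderiv ℝ B v with hT
    -- cyclic permutation
    have cyc : ∀ x y z : E, T x y z = T z x y := by
      intro x y z
      rw [s12 x y z, s23 y x z, s12 y z x, s23 z y x]
    -- J on slots 1 and 2
    have r12 : ∀ x y z : E, T (Complex.I • x) (Complex.I • y) z = T x y z := by
      intro x y z
      calc T (Complex.I • x) (Complex.I • y) z
          = T z (Complex.I • x) (Complex.I • y) := cyc _ _ _
        _ = T z x y := (r z x y).symm
        _ = T x y z := (cyc x y z).symm
    have hzero : ∀ x y z : E, T x y z = 0 := by
      intro x y z
      have hkey : T x y z = -T x y z := by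
        calc T x y z = T x (Complex.I • y) (Complex.I • z) := r x y z
          _ = T (Complex.I • y) x (Complex.I • z) := s12 _ _ _
          _ = T (Complex.I • y) (Complex.I • x) (Complex.I • (Complex.I • z)) := r _ _ _
          _ = T (Complex.I • y) (Complex.I • x) (-z) := by rw [hII z]
          _ = -(T (Complex.I • y) (Complex.I • x) z) := map_neg _ _
          _ = -(T y x z) := by rw [r12 y x z]
          _ = -T x y z := by rw [← s12 x y z]
      linarith
    ext w a b
    simp [hzero w a b]
  -- B is constant
  have hnontriv : Nontrivial E := by
    rw [← rank_pos_iff_nontrivial (R := ℝ)]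
    exact lt_trans zero_lt_one hrank
  obtain ⟨v₀, hv₀⟩ := exists_ne (0 : E)
  have hBconst : ∀ v : E, v ≠ 0 → B v = B v₀ := by
    intro v hv
    refine const_on_of_hasFDerivAt_zero hSopen hSconn (fun u hu => ?_) (hmemS v hv) (hmemS v₀ hv₀)
    have := hCd u hu
    rwa [hCzero u hu] at this
  set B₀ := B v₀ with hB₀
  have hB₀sym : ∀ a b : E, B₀ a b = B₀ b a := hBsym v₀ hv₀
  have hB₀11 : ∀ a b : E, B₀ a b = B₀ (Complex.I • a) (Complex.I • b) := hi v₀ hv₀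
  -- real homogeneity of G
  have h2smul : ∀ u : E, (2:ℂ) • u = (2:ℝ) • u := fun u => by
    rw [show (2:ℂ) = algebraMap ℝ ℂ 2 by norm_num, algebraMap_smul]
  have hG2 : ∀ u : E, G ((2:ℝ) • u) = 4 * G u := by
    intro u
    rw [← h2smul u, hhom 2 u]
    norm_num
  have h2ne : ∀ v : E, v ≠ 0 → (2:ℝ) • v ≠ 0 := fun v hv =>
    smul_ne_zero two_ne_zero hv
  -- homogeneity of f
  have hfhom : ∀ v : E, v ≠ 0 → ∀ a : E, f ((2:ℝ) • v) a = 2 * f v a := by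
    intro v hv a
    have hL : HasFDerivAt (fun u : E => (2:ℝ) • u) ((2:ℝ) • ContinuousLinearMap.id ℝ E) v :=
      (hasFDerivAt_id v).const_smul (2:ℝ)
    have h1 : HasFDerivAt (fun u : E => G ((2:ℝ) • u))
        ((f ((2:ℝ) • v)).comp ((2:ℝ) • ContinuousLinearMap.id ℝ E)) v :=
      (hfd _ (h2ne v hv)).comp v hL
    have h2 : HasFDerivAt (fun u : E => 4 * G u) ((4:ℝ) • f v) v :=
      (hfd v hv).const_mul 4
    have heq : (fun u : E => 4 * G u) = fun u : E => G ((2:ℝ) • u) := by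
      funext u; rw [hG2 u]
    rw [heq] at h2
    have h3 := h1.unique h2
    have h4 := congrArg (fun L => L a) h3
    simp only [ContinuousLinearMap.comp_apply, ContinuousLinearMap.smul_apply,
      ContinuousLinearMap.coe_id', id_eq, smul_eq_mul, map_smul] at h4
    linarith
  -- f v = B₀ v
  have hfB : ∀ v : E, v ≠ 0 → ∀ a : E, f v a = B₀ v a := by
    intro v hv a
    have hderiv0 : ∀ u ∈ ({0}ᶜ : Set E),
        HasFDerivAt (fun u => f u a - B₀ u a) (0 : E →L[ℝ] ℝ) u := by
      intro u hu
      have hu' : u ≠ 0 := hu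
      have h1 : HasFDerivAt (fun u => f u a)
          ((ContinuousLinearMap.apply ℝ ℝ a).comp (B u)) u :=
        ((ContinuousLinearMap.apply ℝ ℝ a).hasFDerivAt).comp u (hBd u hu')
      have h2 : HasFDerivAt (fun u => B₀ u a)
          ((ContinuousLinearMap.apply ℝ ℝ a).comp B₀) u :=
        ((ContinuousLinearMap.apply ℝ ℝ a).comp B₀).hasFDerivAt
      have h3 := h1.sub h2
      rw [hBconst u hu', sub_self] at h3
      exact h3
    have hc := const_on_of_hasFDerivAt_zero hSopen hSconn hderiv0
      (hmemS v hv) (hmemS _ (h2ne v hv))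
    have hf2 := hfhom v hv a
    have hB2 : B₀ ((2:ℝ) • v) a = 2 * B₀ v a := by
      rw [map_smul]; simp
    rw [hf2, hB2] at hc
    linarith
  -- G v = ½ B₀ v v
  refine ⟨B₀, hB₀sym, hB₀11, ?_⟩
  have hquadd : ∀ u : E, u ≠ 0 →
      HasFDerivAt (fun u => G u - (1/2) * B₀ u u) (0 : E →L[ℝ] ℝ) u := by
    intro u hu
    have hq : HasFDerivAt (fun u : E => B₀ u u)
        (B₀.precompR E u (ContinuousLinearMap.id ℝ E)
          + B₀.precompL E (ContinuousLinearMap.id ℝ E) u) u :=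
      B₀.hasFDerivAt_of_bilinear (hasFDerivAt_id u) (hasFDerivAt_id u)
    have h3 := (hfd u hu).sub (hq.const_mul (1/2:ℝ))
    have heqd : f u - (1/2:ℝ) • (B₀.precompR E u (ContinuousLinearMap.id ℝ E)
          + B₀.precompL E (ContinuousLinearMap.id ℝ E) u) = 0 := by
      ext a
      simp only [ContinuousLinearMap.sub_apply, ContinuousLinearMap.smul_apply,
        ContinuousLinearMap.add_apply, ContinuousLinearMap.precompR_apply, ContinuousLinearMap.compL_apply,
        ContinuousLinearMap.precompL_apply, ContinuousLinearMap.coe_id', id_eq,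
        ContinuousLinearMap.comp_id,
        smul_eq_mul, ContinuousLinearMap.zero_apply]
      rw [hfB u hu a, hB₀sym a u]
      ring
    rwa [heqd] at h3
  intro v
  rcases eq_or_ne v 0 with rfl | hv
  · simp [h0]
  · have hc := const_on_of_hasFDerivAt_zero hSopen hSconn
      (fun u hu => hquadd u hu) (hmemS v hv) (hmemS _ (h2ne v hv))
    have hB4 : B₀ ((2:ℝ) • v) ((2:ℝ) • v) = 4 * B₀ v v := by
      rw [map_smul]; simp; ring
    rw [hG2 v, hB4] at hc
    linarith

end key

section csm

variable {E : Type*} [NormedAddCommGroup E] [NormedSpace ℝ E] [NormedSpace ℂ E]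
  [IsScalarTower ℝ ℂ E]

theorem csmul_decomp (c : ℂ) (a : E) : c • a = c.re • a + c.im • (Complex.I • a) := by
  have h1 : (c.re : ℂ) • a = c.re • a := algebraMap_smul ℂ c.re a
  have h2 : (c.im : ℂ) • (Complex.I • a) = c.im • (Complex.I • a) := algebraMap_smul ℂ c.im _
  rw [← h1, ← h2, smul_smul, ← add_smul]
  congr 1
  exact (Complex.re_add_im c).symm

end csm


theorem snd_fderiv_of_quadratic {E : Type*} [NormedAddCommGroup E] [NormedSpace ℝ E]
    (c : E →L[ℝ] E →L[ℝ] ℝ) (v a b : E) :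
    fderiv ℝ (fderiv ℝ (fun u => c u u)) v a b = c a b + c b a := by
  have h1 : ∀ w : E, HasFDerivAt (fun u => c u u) ((c + c.flip) w) w := by
    intro w
    have h := c.hasFDerivAt_of_bilinear (hasFDerivAt_id w) (hasFDerivAt_id w)
    have heq : (c + c.flip) w = c.precompR E w (ContinuousLinearMap.id ℝ E)
        + c.precompL E (ContinuousLinearMap.id ℝ E) w := by
      ext x
      simp [ContinuousLinearMap.precompR_apply, ContinuousLinearMap.precompL_apply]
    rw [heq]
    exact h
  have h2 : fderiv ℝ (fun u => c u u) = ⇑(c + c.flip) := funext fun w => (h1 w).fderiv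
  rw [h2, ContinuousLinearMap.fderiv]
  simp

set_option maxHeartbeats 1000000 in
/-- Let `G : ℂⁿ → ℝ` be smooth on `ℂⁿ \ {0}`, continuous at `0` with
`G(0) = 0`, and satisfy `G(λv) = |λ|²G(v)`.  Then the real Hessian of `G` is of type `(1,1)`
at every `v ≠ 0` (i.e. `D²G(v)[a,b] = D²G(v)[i·a, i·b]`) if and only if `G` comes from a
Hermitian metric, i.e. there is a Hermitian matrix `H = (h_{jk̄})` with
`G(v) = Σ_{j,k} h_{jk̄} vʲ v̄ᵏ`. -/
theorem statement_11 {n : ℕ} (G : EuclideanSpace ℂ (Fin n) → ℝ)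
    (hsmooth : ∀ v : EuclideanSpace ℂ (Fin n), v ≠ 0 → ContDiffAt ℝ (⊤ : ℕ∞) G v)
    (hcont : ContinuousAt G 0) (h0 : G 0 = 0)
    (hhom : ∀ (c : ℂ) (v : EuclideanSpace ℂ (Fin n)), G (c • v) = ‖c‖ ^ 2 * G v) :
    (∀ v : EuclideanSpace ℂ (Fin n), v ≠ 0 → ∀ a b : EuclideanSpace ℂ (Fin n),
        fderiv ℝ (fderiv ℝ G) v a b
          = fderiv ℝ (fderiv ℝ G) v (Complex.I • a) (Complex.I • b))
      ↔ ∃ H : Matrix (Fin n) (Fin n) ℂ, H.IsHermitian ∧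
          ∀ v : EuclideanSpace ℂ (Fin n),
            (G v : ℂ) = ∑ j : Fin n, ∑ k : Fin n, H j k * v j * (starRingEnd ℂ) (v k) := by
  constructor
  · -- forward direction
    intro hi
    by_cases hn : n = 0
    · subst hn
      refine ⟨0, Matrix.isHermitian_zero, fun v => ?_⟩
      have hv : v = 0 := Subsingleton.elim v 0
      simp [hv, h0]
    · have hrank : 1 < Module.rank ℝ (EuclideanSpace ℂ (Fin n)) := by
        have h1 : Module.finrank ℝ (EuclideanSpace ℂ (Fin n)) = 2 * n := by
          rw [← Module.finrank_mul_finrank ℝ ℂ (EuclideanSpace ℂ (Fin n)),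
            Complex.finrank_real_complex, finrank_euclideanSpace_fin]
        rw [← Module.finrank_eq_rank]
        rw [h1]
        have : 1 < 2 * n := by omega
        exact_mod_cast this
      obtain ⟨B₀, hsym, h11, hquad⟩ := key hrank G hsmooth h0 hhom hi
      have hII : ∀ x : EuclideanSpace ℂ (Fin n),
          Complex.I • (Complex.I • x) = -x := fun x => by
        rw [smul_smul, Complex.I_mul_I, neg_one_smul]
      have hskew : ∀ a b : EuclideanSpace ℂ (Fin n),
          B₀ (Complex.I • a) b = -B₀ a (Complex.I • b) := by
        intro a b
        rw [h11 (Complex.I • a) b, hII a, map_neg]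
        simp
      have hdiag : ∀ v : EuclideanSpace ℂ (Fin n), B₀ v (Complex.I • v) = 0 := by
        intro v
        have h1 : B₀ (Complex.I • v) v = -B₀ v (Complex.I • v) := hskew v v
        have h2 : B₀ (Complex.I • v) v = B₀ v (Complex.I • v) := hsym _ _
        linarith [h1, h2]
      -- the sesquilinear form
      set q : EuclideanSpace ℂ (Fin n) → EuclideanSpace ℂ (Fin n) → ℂ := fun a b =>
        (((B₀ a b : ℝ) : ℂ) + Complex.I * ((B₀ a (Complex.I • b) : ℝ) : ℂ)) / 2 with hq
      have qadd1 : ∀ a a' b, q (a + a') b = q a b + q a' b := by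
        intro a a' b
        simp only [hq, map_add, ContinuousLinearMap.add_apply]
        push_cast
        ring
      have qadd2 : ∀ a b b', q a (b + b') = q a b + q a b' := by
        intro a b b'
        simp only [hq, smul_add, map_add]
        push_cast
        ring
      have qr1 : ∀ (r : ℝ) a b, q (r • a) b = (r : ℂ) * q a b := by
        intro r a b
        simp only [hq, map_smul, ContinuousLinearMap.smul_apply, smul_eq_mul]
        push_cast
        ring
      have qr2 : ∀ (r : ℝ) a b, q a (r • b) = (r : ℂ) * q a b := by
        intro r a b
        have hcomm : Complex.I • (r • b) = r • (Complex.I • b) := smul_comm _ _ _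
        simp only [hq, hcomm, map_smul, smul_eq_mul]
        push_cast
        ring
      have qI1 : ∀ a b, q (Complex.I • a) b = Complex.I * q a b := by
        intro a b
        have h1 : B₀ (Complex.I • a) (Complex.I • b) = B₀ a b := (h11 a b).symm
        simp only [hq, hskew a b, h1]
        push_cast
        ring_nf
        rw [Complex.I_sq]
        ring
      have qI2 : ∀ a b, q a (Complex.I • b) = -Complex.I * q a b := by
        intro a b
        simp only [hq, hII b, map_neg]
        push_cast
        ring_nf
        rw [Complex.I_sq]
        ring
      have qc1 : ∀ (c : ℂ) a b, q (c • a) b = c * q a b := by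
        intro c a b
        rw [csmul_decomp c a, qadd1, qr1 c.re a b, qr1 c.im (Complex.I • a) b, qI1]
        linear_combination q a b * (Complex.re_add_im c)
      have hconj_c : ∀ (c : ℂ), (starRingEnd ℂ) c = (c.re : ℂ) - (c.im : ℂ) * Complex.I := by
        intro c
        nth_rewrite 1 [← Complex.re_add_im c]
        simp only [map_add, map_mul, Complex.conj_I, Complex.conj_ofReal]
        ring
      have qc2 : ∀ (c : ℂ) a b, q a (c • b) = (starRingEnd ℂ) c * q a b := by
        intro c a b
        rw [csmul_decomp c b, qadd2, qr2 c.re a b, qr2 c.im a (Complex.I • b), qI2, hconj_c c]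
        ring
      have qconj : ∀ a b, (starRingEnd ℂ) (q a b) = q b a := by
        intro a b
        have h1 : (B₀ b (Complex.I • a) : ℝ) = -B₀ a (Complex.I • b) := by
          rw [hsym b (Complex.I • a)]; exact hskew a b
        have h2 : (B₀ b a : ℝ) = B₀ a b := hsym b a
        simp only [hq, map_div₀, map_add, map_mul, Complex.conj_I, Complex.conj_ofReal,
          map_ofNat]
        rw [h1, h2]
        push_cast
        ring
      have qdiag : ∀ v, q v v = ((G v : ℝ) : ℂ) := by
        intro v
        simp only [hq, hdiag]
        rw [hquad v]
        push_cast
        ring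
      set e : Fin n → EuclideanSpace ℂ (Fin n) := fun j => EuclideanSpace.single j 1 with he
      have hrep : ∀ v : EuclideanSpace ℂ (Fin n), ∑ j, v j • e j = v := by
        intro v
        ext i
        simp only [he]
        rw [show ((∑ j, v j • EuclideanSpace.single j (1:ℂ)) i)
            = ∑ j, (v j • EuclideanSpace.single j (1:ℂ)) i from
          by rw [WithLp.ofLp_sum, Finset.sum_apply]]
        simp [EuclideanSpace.single_apply]
      have hsum1 : ∀ b v, q v b = ∑ j, v j * q (e j) b := by
        intro b v
        let φ : EuclideanSpace ℂ (Fin n) →+ ℂ :=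
          AddMonoidHom.mk' (fun a => q a b) (fun x y => qadd1 x y b)
        have h1 : q v b = φ v := rfl
        rw [h1]
        conv_lhs => rw [← hrep v]
        rw [map_sum]
        exact Finset.sum_congr rfl fun j _ => qc1 (v j) (e j) b
      have hsum2 : ∀ a v, q a v = ∑ k, (starRingEnd ℂ) (v k) * q a (e k) := by
        intro a v
        let φ : EuclideanSpace ℂ (Fin n) →+ ℂ :=
          AddMonoidHom.mk' (fun b => q a b) (fun x y => qadd2 a x y)
        have h1 : q a v = φ v := rfl
        rw [h1]
        conv_lhs => rw [← hrep v]
        rw [map_sum]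
        exact Finset.sum_congr rfl fun k _ => qc2 (v k) a (e k)
      refine ⟨Matrix.of fun j k => q (e j) (e k), ?_, ?_⟩
      · exact Matrix.ext fun i j => qconj (e j) (e i)
      · intro v
        calc ((G v : ℝ) : ℂ) = q v v := (qdiag v).symm
          _ = ∑ j, v j * q (e j) v := hsum1 v v
          _ = ∑ j, v j * ∑ k, (starRingEnd ℂ) (v k) * q (e j) (e k) := by
              exact Finset.sum_congr rfl fun j _ => by rw [hsum2 (e j) v]
          _ = ∑ j, ∑ k, Matrix.of (fun j k => q (e j) (e k)) j k * v j
              * (starRingEnd ℂ) (v k) := by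
              refine Finset.sum_congr rfl fun j _ => ?_
              rw [Finset.mul_sum]
              exact Finset.sum_congr rfl fun k _ => by
                rw [Matrix.of_apply]; ring

  · -- reverse direction
    rintro ⟨H, _hHerm, hformula⟩ v _hv a b
    classical
    set β : EuclideanSpace ℂ (Fin n) → EuclideanSpace ℂ (Fin n) → ℝ := fun x y =>
      (∑ j, ∑ k, H j k * x j * (starRingEnd ℂ) (y k)).re with hβ
    have hsumfst : ∀ (c : ℂ) (x y : EuclideanSpace ℂ (Fin n)),
        (∑ j, ∑ k, H j k * (c * x j) * (starRingEnd ℂ) (y k))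
          = c * ∑ j, ∑ k, H j k * x j * (starRingEnd ℂ) (y k) := by
      intro c x y
      rw [Finset.mul_sum]
      refine Finset.sum_congr rfl fun j _ => ?_
      rw [Finset.mul_sum]
      exact Finset.sum_congr rfl fun k _ => by ring
    have hsumsnd : ∀ (c : ℂ) (x y : EuclideanSpace ℂ (Fin n)),
        (∑ j, ∑ k, H j k * x j * (c * (starRingEnd ℂ) (y k)))
          = c * ∑ j, ∑ k, H j k * x j * (starRingEnd ℂ) (y k) := by
      intro c x y
      rw [Finset.mul_sum]
      refine Finset.sum_congr rfl fun j _ => ?_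
      rw [Finset.mul_sum]
      exact Finset.sum_congr rfl fun k _ => by ring
    have hblade : ∀ x y : EuclideanSpace ℂ (Fin n), β x y = β x y := fun _ _ => rfl
    let bl : EuclideanSpace ℂ (Fin n) →ₗ[ℝ] EuclideanSpace ℂ (Fin n) →ₗ[ℝ] ℝ :=
      LinearMap.mk₂ ℝ β
        (by intro x x' y
            simp only [hβ, PiLp.add_apply, mul_add, add_mul, Finset.sum_add_distrib,
              Complex.add_re])
        (by intro r x y
            simp only [hβ, PiLp.smul_apply, Complex.real_smul, smul_eq_mul]
            rw [show (∑ j, ∑ k, H j k * ((r:ℂ) * x j) * (starRingEnd ℂ) (y k))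
              = (r:ℂ) * ∑ j, ∑ k, H j k * x j * (starRingEnd ℂ) (y k) from hsumfst r x y]
            exact Complex.re_ofReal_mul r _)
        (by intro x y y'
            simp only [hβ, PiLp.add_apply, map_add, mul_add, Finset.sum_add_distrib,
              Complex.add_re])
        (by intro r x y
            simp only [hβ, PiLp.smul_apply, Complex.real_smul, smul_eq_mul, map_mul,
              Complex.conj_ofReal]
            rw [show (∑ j, ∑ k, H j k * x j * ((r:ℂ) * (starRingEnd ℂ) (y k)))
              = (r:ℂ) * ∑ j, ∑ k, H j k * x j * (starRingEnd ℂ) (y k) from hsumsnd r x y]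
            exact Complex.re_ofReal_mul r _)
    let bc : EuclideanSpace ℂ (Fin n) →L[ℝ] EuclideanSpace ℂ (Fin n) →L[ℝ] ℝ :=
      LinearMap.toContinuousLinearMap
        ((LinearMap.toContinuousLinearMap :
          (EuclideanSpace ℂ (Fin n) →ₗ[ℝ] ℝ) ≃ₗ[ℝ] (EuclideanSpace ℂ (Fin n) →L[ℝ] ℝ)).toLinearMap
          ∘ₗ bl)
    have hbc : ∀ x y, bc x y = β x y := by
      intro x y
      simp [bc, bl, LinearMap.coe_toContinuousLinearMap', LinearMap.mk₂_apply]
    have hGbc : G = fun u => bc u u := by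
      funext u
      rw [hbc u u]
      have h2 := congrArg Complex.re (hformula u)
      simpa [hβ] using h2
    have hInv : ∀ x y : EuclideanSpace ℂ (Fin n),
        bc (Complex.I • x) (Complex.I • y) = bc x y := by
      intro x y
      rw [hbc, hbc]
      simp only [hβ]
      congr 1
      refine Finset.sum_congr rfl fun j _ => ?_
      refine Finset.sum_congr rfl fun k _ => ?_
      simp only [PiLp.smul_apply, smul_eq_mul, map_mul, Complex.conj_I]
      ring_nf
      rw [Complex.I_sq]
      ring
    rw [hGbc, snd_fderiv_of_quadratic bc v a b, snd_fderiv_of_quadratic bc v _ _,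
      hInv a b, hInv b a]
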